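/- For k ≥ 1, the adjoint Jacobi derivative satisfies δ*(√(1-x²) P_{k-1}^{(α+1,β+1)})(x) = 2k P_k^{(α,β)}(x) on (-1,1). -/

import Mathlib

/-!
Writing `ρ = (1 - x)^(α + 1/2) (1 + x)^(β + 1/2)`, the operator is `δ* g = -√(1 - x²) ρ⁻¹ (ρ g)'`,
and `√(1 - x²) ρ⁻¹ = (1 - x)^(-α) (1 + x)^(-β)`. For `g = √(1 - x²) P_{k-1}^{(α+1,β+1)}`, the
Rodrigues formula makes `ρ g` a constant multiple of the `(k-1)`-st derivative of
`(1 - x)^(α+k) (1 + x)^(β+k)`; one more derivative yields the Rodrigues formula for `P_k^{(α,β)}`.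
-/

noncomputable def jacobiP (α β : ℝ) (k : ℕ) (x : ℝ) : ℝ :=
  ((-1 : ℝ) ^ k / (2 ^ k * (Nat.factorial k : ℝ))) * (1 - x) ^ (-α) * (1 + x) ^ (-β) *
    iteratedDeriv k (fun y => (1 - y) ^ (α + (k : ℝ)) * (1 + y) ^ (β + (k : ℝ))) x

noncomputable def jacDelta (f : ℝ → ℝ) (x : ℝ) : ℝ := Real.sqrt (1 - x ^ 2) * deriv f x

noncomputable def jacDeltaStar (α β : ℝ) (g : ℝ → ℝ) (x : ℝ) : ℝ :=
  -Real.sqrt (1 - x ^ 2) * deriv g x +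
    ((α + 1 / 2) * Real.sqrt ((1 + x) / (1 - x))
      - (β + 1 / 2) * Real.sqrt ((1 - x) / (1 + x))) * g x

open Set
open scoped Nat

noncomputable def jacobiWeight (a b y : ℝ) : ℝ := (1 - y) ^ a * (1 + y) ^ b

theorem jacobiWeight_zero_zero (y : ℝ) : jacobiWeight 0 0 y = 1 := by
  simp [jacobiWeight]

theorem jacobiWeight_mul {a b c d x : ℝ} (hx : x ∈ Ioo (-1 : ℝ) 1) :
    jacobiWeight a b x * jacobiWeight c d x = jacobiWeight (a + c) (b + d) x := by
  have h₁ : 0 < 1 - x := by linarith [hx.2]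
  have h₂ : 0 < 1 + x := by linarith [hx.1]
  simp only [jacobiWeight, Real.rpow_add h₁, Real.rpow_add h₂]
  ring

theorem sqrt_one_sub_sq_eq_jacobiWeight {x : ℝ} (hx : x ∈ Ioo (-1 : ℝ) 1) :
    √(1 - x ^ 2) = jacobiWeight (1 / 2) (1 / 2) x := by
  rw [jacobiWeight, ← Real.sqrt_eq_rpow, ← Real.sqrt_eq_rpow, ← Real.sqrt_mul (by linarith [hx.2])]
  ring_nf

theorem hasDerivAt_jacobiWeight (a b : ℝ) {x : ℝ} (hx : x ∈ Ioo (-1 : ℝ) 1) :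
    HasDerivAt (jacobiWeight a b) (jacobiWeight a b x * (b / (1 + x) - a / (1 - x))) x := by
  have h₁ : 0 < 1 - x := by linarith [hx.2]
  have h₂ : 0 < 1 + x := by linarith [hx.1]
  have d₁ := ((hasDerivAt_id x).const_sub 1).rpow_const (p := a) (Or.inl h₁.ne')
  have d₂ := ((hasDerivAt_id x).const_add 1).rpow_const (p := b) (Or.inl h₂.ne')
  refine (d₁.mul d₂).congr_deriv ?_
  simp only [jacobiWeight, id, Real.rpow_sub_one h₁.ne', Real.rpow_sub_one h₂.ne']
  field_simp
  ring

theorem contDiffOn_jacobiWeight (a b : ℝ) : ContDiffOn ℝ ⊤ (jacobiWeight a b) (Ioo (-1) 1) := by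
  intro y hy
  have h₁ : 0 < 1 - y := by linarith [hy.2]
  have h₂ : 0 < 1 + y := by linarith [hy.1]
  exact ((contDiffAt_const.sub contDiffAt_id).rpow_const_of_ne h₁.ne').mul
    ((contDiffAt_const.add contDiffAt_id).rpow_const_of_ne h₂.ne') |>.contDiffWithinAt

theorem differentiableAt_iteratedDeriv_jacobiWeight (a b : ℝ) (n : ℕ) {x : ℝ}
    (hx : x ∈ Ioo (-1 : ℝ) 1) : DifferentiableAt ℝ (iteratedDeriv n (jacobiWeight a b)) x :=
  (((contDiffOn_jacobiWeight a b).differentiableOn_iteratedDerivWithin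
      (WithTop.coe_lt_top _) (uniqueDiffOn_Ioo _ _)).congr
    fun _ hy => (iteratedDerivWithin_of_isOpen isOpen_Ioo hy).symm).differentiableAt
    (isOpen_Ioo.mem_nhds hx)

theorem jacobiP_eq (α β : ℝ) (k : ℕ) (x : ℝ) :
    jacobiP α β k x = (-1) ^ k / (2 ^ k * k !) * jacobiWeight (-α) (-β) x *
      iteratedDeriv k (jacobiWeight (α + k) (β + k)) x := by
  rw [jacobiP, jacobiWeight, mul_assoc _ ((1 - x) ^ (-α))]
  rfl

theorem differentiableAt_jacobiP (α β : ℝ) (k : ℕ) {x : ℝ} (hx : x ∈ Ioo (-1 : ℝ) 1) :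
    DifferentiableAt ℝ (jacobiP α β k) x := by
  simp only [funext (jacobiP_eq α β k)]
  exact ((hasDerivAt_jacobiWeight _ _ hx).differentiableAt.const_mul _).mul
    (differentiableAt_iteratedDeriv_jacobiWeight _ _ k hx)

theorem jacDeltaStar_eq {α β x : ℝ} {g : ℝ → ℝ} (hx : x ∈ Ioo (-1 : ℝ) 1)
    (hg : DifferentiableAt ℝ g x) :
    jacDeltaStar α β g x = -jacobiWeight (-α) (-β) x *
      deriv (fun y => jacobiWeight (α + 1 / 2) (β + 1 / 2) y * g y) x := by
  have h₁ : 0 < 1 - x := by linarith [hx.2]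
  have h₂ : 0 < 1 + x := by linarith [hx.1]
  rw [deriv_fun_mul (hasDerivAt_jacobiWeight _ _ hx).differentiableAt hg,
    (hasDerivAt_jacobiWeight _ _ hx).deriv]
  have hρ : jacobiWeight (-α) (-β) x * jacobiWeight (α + 1 / 2) (β + 1 / 2) x = √(1 - x ^ 2) := by
    rw [jacobiWeight_mul hx, sqrt_one_sub_sq_eq_jacobiWeight hx]
    ring_nf
  have hs : √(1 - x ^ 2) = √(1 - x) * √(1 + x) := by
    rw [← Real.sqrt_mul h₁.le]; ring_nf
  have hs₁ : √(1 - x) ^ 2 = 1 - x := Real.sq_sqrt h₁.le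
  have hs₂ : √(1 + x) ^ 2 = 1 + x := Real.sq_sqrt h₂.le
  calc jacDeltaStar α β g x
      = -√(1 - x ^ 2) * (deriv g x + ((β + 1 / 2) / (1 + x) - (α + 1 / 2) / (1 - x)) * g x) := by
        rw [jacDeltaStar, Real.sqrt_div h₂.le, Real.sqrt_div h₁.le, hs]
        field_simp
        rw [hs₁, hs₂]
        ring
    _ = _ := by rw [← hρ]; ring

theorem jacobiWeight_mul_sqrt_mul_jacobiP (α β : ℝ) (m : ℕ) {y : ℝ} (hy : y ∈ Ioo (-1 : ℝ) 1) :
    jacobiWeight (α + 1 / 2) (β + 1 / 2) y * (√(1 - y ^ 2) * jacobiP (α + 1) (β + 1) m y) =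
      (-1) ^ m / (2 ^ m * m !) *
        iteratedDeriv m (jacobiWeight (α + (m + 1 : ℕ)) (β + (m + 1 : ℕ))) y := by
  have hρ : jacobiWeight (α + 1 / 2) (β + 1 / 2) y * √(1 - y ^ 2) *
      jacobiWeight (-(α + 1)) (-(β + 1)) y = 1 := by
    rw [sqrt_one_sub_sq_eq_jacobiWeight hy, jacobiWeight_mul hy, jacobiWeight_mul hy, ←
      jacobiWeight_zero_zero y]
    ring_nf
  rw [jacobiP_eq, show α + 1 + (m : ℝ) = α + (m + 1 : ℕ) by push_cast; ring,
    show β + 1 + (m : ℝ) = β + (m + 1 : ℕ) by push_cast; ring]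
  linear_combination ((-1) ^ m / (2 ^ m * m !) *
    iteratedDeriv m (jacobiWeight (α + (m + 1 : ℕ)) (β + (m + 1 : ℕ))) y) * hρ

theorem jacobi_adjoint_derivative_general (α β : ℝ) (k : ℕ) (hk : 1 ≤ k)
    (x : ℝ) (hx : x ∈ Set.Ioo (-1 : ℝ) 1) :
    jacDeltaStar α β (fun y => Real.sqrt (1 - y ^ 2) * jacobiP (α + 1) (β + 1) (k - 1) y) x =
      2 * (k : ℝ) * jacobiP α β k x := by
  obtain ⟨m, rfl⟩ : ∃ m, k = m + 1 := ⟨k - 1, by omega⟩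
  simp only [Nat.add_sub_cancel]
  have hg : DifferentiableAt ℝ (fun y => √(1 - y ^ 2) * jacobiP (α + 1) (β + 1) m y) x := by
    have hsqrt : DifferentiableAt ℝ (fun y : ℝ => √(1 - y ^ 2)) x :=
      DifferentiableAt.sqrt (by fun_prop) (by nlinarith [hx.1, hx.2])
    exact hsqrt.mul (differentiableAt_jacobiP _ _ m hx)
  have hρg := Filter.eventuallyEq_of_mem (isOpen_Ioo.mem_nhds hx)
    fun y hy => jacobiWeight_mul_sqrt_mul_jacobiP α β m hy
  rw [jacDeltaStar_eq hx hg, hρg.deriv_eq,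
    deriv_const_mul _ (differentiableAt_iteratedDeriv_jacobiWeight _ _ m hx),
    ← iteratedDeriv_succ, jacobiP_eq, Nat.factorial_succ]
  push_cast
  field_simp
  ring

theorem jacobi_adjoint_derivative (α β : ℝ) (hα : -1 < α) (hβ : -1 < β) (k : ℕ) (hk : 1 ≤ k)
    (x : ℝ) (hx : x ∈ Set.Ioo (-1 : ℝ) 1) :
    jacDeltaStar α β (fun y => Real.sqrt (1 - y ^ 2) * jacobiP (α + 1) (β + 1) (k - 1) y) x =
      2 * (k : ℝ) * jacobiP α β k x :=
  jacobi_adjoint_derivative_general α β k hk x hx
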